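/- Let $f : [0,1]^{d-1} \to [0,1]$ be Hölder continuous of order $\alpha \in (0,1]$. Let $\mathcal{P} = \{G_n(f)\}$ where $G_n(f) = \{(j/q, f(j/q)) : j \in \mathbb{Z}^{d-1}\cap[0,q)^{d-1}\}$, $n = q^{d-1}$. Then the discrete Hausdorff dimension satisfies $\dim_{\mathcal{H}}(\mathcal{P}) \le d - \alpha$, i.e., $\sup\{s : \sup_n I_s(G_n(f)) < \infty\} \le d-\alpha$. -/

import Mathlib

open Finset

lemma eudist_le {k : ℕ} (u v : EuclideanSpace ℝ (Fin k)) {c : ℝ} (hc : 0 ≤ c)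
    (h : ∀ i, |u i - v i| ≤ c) : dist u v ≤ Real.sqrt k * c := by
  rw [EuclideanSpace.dist_eq]
  have h1 : ∑ i, dist (u i) (v i) ^ 2 ≤ (k : ℝ) * c ^ 2 := by
    calc ∑ i, dist (u i) (v i) ^ 2 ≤ ∑ _i : Fin k, c ^ 2 :=
          Finset.sum_le_sum (fun i _ => by
            rw [Real.dist_eq]; exact pow_le_pow_left₀ (abs_nonneg _) (h i) 2)
      _ = (k : ℝ) * c ^ 2 := by simp [Finset.sum_const]
  calc Real.sqrt (∑ i, dist (u i) (v i) ^ 2) ≤ Real.sqrt ((k : ℝ) * c ^ 2) :=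
        Real.sqrt_le_sqrt h1
    _ = Real.sqrt k * c := by
        rw [Real.sqrt_mul (by positivity), Real.sqrt_sq hc]

lemma eudist_ge {k : ℕ} (u v : EuclideanSpace ℝ (Fin k)) (i : Fin k) :
    |u i - v i| ≤ dist u v := by
  rw [EuclideanSpace.dist_eq, ← Real.dist_eq]
  have h1 : dist (u i) (v i) ^ 2 ≤ ∑ i, dist (u i) (v i) ^ 2 :=
    Finset.single_le_sum (f := fun j => dist (u j) (v j) ^ 2)
      (fun _ _ => sq_nonneg _) (Finset.mem_univ i)
  calc dist (u i) (v i) = Real.sqrt (dist (u i) (v i) ^ 2) := by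
        rw [Real.sqrt_sq dist_nonneg]
    _ ≤ _ := Real.sqrt_le_sqrt h1

lemma floor_sub_abs (a b : ℝ) : |((⌊a⌋ : ℝ) - (⌊b⌋ : ℝ))| ≤ |a - b| + 1 := by
  have h1 := Int.floor_le a
  have h2 := Int.floor_le b
  have h3 := Int.lt_floor_add_one a
  have h4 := Int.lt_floor_add_one b
  rw [abs_sub_le_iff]
  constructor <;> nlinarith [le_abs_self (a - b), neg_abs_le (a - b)]

lemma abs_sub_lt_one_of_floor_eq {a b : ℝ} (h : ⌊a⌋ = ⌊b⌋) : |a - b| < 1 := by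
  have h1 := Int.floor_le a
  have h2 := Int.floor_le b
  have h3 := Int.lt_floor_add_one a
  have h4 := Int.lt_floor_add_one b
  rw [h] at h1 h3
  rw [abs_sub_lt_iff]; constructor <;> linarith

/-- The point of the point-set graph `G_n(f)` corresponding to index `j`. -/
noncomputable def graphPt (d q : ℕ) (f : EuclideanSpace ℝ (Fin (d - 1)) → ℝ)
    (j : Fin (d - 1) → Fin q) : EuclideanSpace ℝ (Fin d) :=
  WithLp.toLp 2 (fun i => if h : (i : ℕ) < d - 1 then (j ⟨i, h⟩ : ℝ) / q
           else f (WithLp.toLp 2 (fun i' => (j i' : ℝ) / q)))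

/-- Discrete `s`-energy of `G_n(f)`, `n = q^(d-1)`, summed over index pairs. -/
noncomputable def graphEnergy (d q : ℕ) (f : EuclideanSpace ℝ (Fin (d - 1)) → ℝ)
    (s : ℝ) : ℝ :=
  (((q : ℝ) ^ (d - 1))⁻¹) ^ 2 *
    ∑ j : Fin (d - 1) → Fin q, ∑ j' : Fin (d - 1) → Fin q,
      if j ≠ j' then dist (graphPt d q f j) (graphPt d q f j') ^ (-s) else 0

/-- The base point of the grid index `j`. -/
noncomputable def xpt (d q : ℕ) (j : Fin (d - 1) → Fin q) :
    EuclideanSpace ℝ (Fin (d - 1)) :=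
  WithLp.toLp 2 (fun i => ((j i : ℕ) : ℝ) / q)

/-- The corner of the coarse cell of `j` (cell width `m` grid steps). -/
noncomputable def cpt (d q m : ℕ) (j : Fin (d - 1) → Fin q) :
    EuclideanSpace ℝ (Fin (d - 1)) :=
  WithLp.toLp 2 (fun i => (((j i : ℕ) / m * m : ℕ) : ℝ) / q)

/-- The coarse key of `j`: base cell plus vertical bucket relative to the cell corner. -/
noncomputable def gkey (d q m t : ℕ) (f : EuclideanSpace ℝ (Fin (d - 1)) → ℝ)
    (j : Fin (d - 1) → Fin q) : (Fin (d - 1) → ℕ) × ℤ :=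
  (fun i => (j i : ℕ) / m,
    ⌊f (xpt d q j) * t⌋ - ⌊f (cpt d q m j) * t⌋)

lemma xpt_mem (d q : ℕ) (hq : 0 < q) (j : Fin (d - 1) → Fin q) (i : Fin (d - 1)) :
    xpt d q j i ∈ Set.Icc (0:ℝ) 1 := by
  have hq0 : (0:ℝ) < q := by exact_mod_cast hq
  constructor
  · show (0:ℝ) ≤ (((j i : ℕ)):ℝ)/(q:ℝ)
    positivity
  · rw [xpt, div_le_one hq0]; exact_mod_cast (j i).isLt.le

lemma cpt_mem (d q m : ℕ) (hq : 0 < q) (j : Fin (d - 1) → Fin q) (i : Fin (d - 1)) :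
    cpt d q m j i ∈ Set.Icc (0:ℝ) 1 := by
  have hq0 : (0:ℝ) < q := by exact_mod_cast hq
  constructor
  · show (0:ℝ) ≤ ((((j i : ℕ)/m*m : ℕ)):ℝ)/(q:ℝ)
    positivity
  · rw [cpt, div_le_one hq0]
    have h1 : ((j i : ℕ)) / m * m ≤ (j i : ℕ) := Nat.div_mul_le_self _ _
    have h2 : (j i : ℕ) ≤ q := (j i).isLt.le
    exact_mod_cast le_trans h1 h2

lemma xpt_cpt_dist (d q m t : ℕ) (hq : q = m * t) (hm : 0 < m) (ht : 0 < t)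
    (j : Fin (d - 1) → Fin q) :
    dist (xpt d q j) (cpt d q m j) ≤ Real.sqrt d / t := by
  have hq1 : 0 < q := by rw [hq]; positivity
  have hq0 : (0:ℝ) < q := by exact_mod_cast hq1
  have ht0 : (0:ℝ) < t := by exact_mod_cast ht
  have hm0 : (m:ℝ) ≠ 0 := by exact_mod_cast hm.ne'
  have ht0' : (t:ℝ) ≠ 0 := by exact_mod_cast ht.ne'
  have hmq : (m:ℝ)/(q:ℝ) = 1/(t:ℝ) := by
    rw [hq]; push_cast; field_simp
  have h1 : dist (xpt d q j) (cpt d q m j) ≤ Real.sqrt (d-1 : ℕ) * (1/t) := by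
    apply eudist_le _ _ (by positivity)
    intro i
    have e1 := Nat.div_add_mod (j i : ℕ) m
    have e2 := Nat.mod_lt (j i : ℕ) hm
    have hle : ((j i : ℕ)/m * m : ℕ) ≤ (j i : ℕ) := Nat.div_mul_le_self _ _
    have hlt : (j i : ℕ) < (j i : ℕ)/m * m + m := by
      rw [Nat.mul_comm]
      omega
    have hcast1 : ((((j i:ℕ)/m*m : ℕ)):ℝ) ≤ (((j i:ℕ)):ℝ) := by exact_mod_cast hle
    have hcast2 : (((j i:ℕ)):ℝ) < ((((j i:ℕ)/m*m : ℕ)):ℝ) + m := by exact_mod_cast hlt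
    have hxi : xpt d q j i = (((j i : ℕ)) : ℝ)/(q:ℝ) := rfl
    have hco : cpt d q m j i = ((((j i : ℕ)/m * m : ℕ)) : ℝ)/(q:ℝ) := rfl
    rw [hxi, hco, div_sub_div_same, abs_div, abs_of_pos hq0, ← hmq]
    gcongr
    rw [abs_le]
    constructor <;> linarith
  calc dist (xpt d q j) (cpt d q m j) ≤ Real.sqrt (d-1:ℕ) * (1/t) := h1
    _ ≤ Real.sqrt d / t := by
        rw [mul_one_div]
        gcongr
        exact_mod_cast Nat.sub_le d 1

lemma gkey_mem (d q m t K : ℕ) (α ρ : ℝ) (hq : q = m * t) (hm : 0 < m) (ht : 1 ≤ t)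
    (hα : α ∈ Set.Ioc (0:ℝ) 1) (hρ : 0 ≤ ρ) (hd2 : 2 ≤ d)
    (f : EuclideanSpace ℝ (Fin (d - 1)) → ℝ)
    (hHolder : ∀ x y, (∀ i, x i ∈ Set.Icc (0 : ℝ) 1) → (∀ i, y i ∈ Set.Icc (0 : ℝ) 1) →
      |f x - f y| ≤ ρ * dist x y ^ α)
    (hK : ρ * Real.sqrt d * (t:ℝ)^((1:ℝ)-α) + 1 ≤ (K:ℝ))
    (j : Fin (d - 1) → Fin q) :
    gkey d q m t f j ∈
      (Fintype.piFinset fun _ : Fin (d-1) => Finset.range t) ×ˢ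
        Finset.Icc (-(K:ℤ)) (K:ℤ) := by
  have htpos : 0 < t := ht
  have ht0 : (0:ℝ) < t := by exact_mod_cast htpos
  have htR : (1:ℝ) ≤ (t:ℝ) := by exact_mod_cast ht
  have hq1 : 0 < q := by rw [hq]; positivity
  have hsd : (1 : ℝ) ≤ Real.sqrt d := by
    rw [show (1:ℝ) = Real.sqrt 1 by simp]
    exact Real.sqrt_le_sqrt (by exact_mod_cast Nat.one_le_of_lt hd2)
  rw [Finset.mem_product]
  constructor
  · rw [Fintype.mem_piFinset]
    intro i
    rw [Finset.mem_range]
    show (j i : ℕ)/m < t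
    rw [Nat.div_lt_iff_lt_mul hm]
    calc (j i : ℕ) < q := (j i).isLt
      _ = t * m := by rw [hq]; ring
  · rw [Finset.mem_Icc]
    -- Hoelder estimate
    have hfd : |f (xpt d q j) - f (cpt d q m j)| ≤ ρ * Real.sqrt d * (t:ℝ)^(-α) := by
      have h := hHolder (xpt d q j) (cpt d q m j) (xpt_mem d q hq1 j) (cpt_mem d q m hq1 j)
      have h2 : dist (xpt d q j) (cpt d q m j) ^ α ≤ (Real.sqrt d / t) ^ α :=
        Real.rpow_le_rpow dist_nonneg (xpt_cpt_dist d q m t hq hm htpos j) hα.1.le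
      have h3 : (Real.sqrt d / t) ^ α = Real.sqrt d ^ α * (t:ℝ)^(-α) := by
        rw [Real.div_rpow (Real.sqrt_nonneg _) ht0.le, Real.rpow_neg ht0.le, div_eq_mul_inv]
      have h4 : Real.sqrt d ^ α ≤ Real.sqrt d := by
        calc Real.sqrt d ^ α ≤ Real.sqrt d ^ (1:ℝ) :=
              Real.rpow_le_rpow_of_exponent_le hsd hα.2
          _ = Real.sqrt d := Real.rpow_one _
      have htneg : (0:ℝ) ≤ (t:ℝ)^(-α) := Real.rpow_nonneg ht0.le _
      calc |f (xpt d q j) - f (cpt d q m j)| ≤ ρ * dist (xpt d q j) (cpt d q m j) ^ α := h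
        _ ≤ ρ * (Real.sqrt d ^ α * (t:ℝ)^(-α)) := by
            rw [← h3]; exact mul_le_mul_of_nonneg_left h2 hρ
        _ ≤ ρ * Real.sqrt d * (t:ℝ)^(-α) := by
            rw [mul_assoc]
            exact mul_le_mul_of_nonneg_left (mul_le_mul_of_nonneg_right h4 htneg) hρ
    have hreal : |((⌊f (xpt d q j)*t⌋:ℝ)) - ((⌊f (cpt d q m j)*t⌋:ℝ))| ≤ (K:ℝ) := by
      have step2 : |f (xpt d q j)*t - f (cpt d q m j)*t|
          = |f (xpt d q j) - f (cpt d q m j)| * t := by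
        rw [← sub_mul, abs_mul, abs_of_pos ht0]
      have step3 : |f (xpt d q j) - f (cpt d q m j)| * t
          ≤ ρ * Real.sqrt d * (t:ℝ)^((1:ℝ)-α) := by
        calc |f (xpt d q j) - f (cpt d q m j)| * t ≤ (ρ * Real.sqrt d * (t:ℝ)^(-α)) * t :=
              mul_le_mul_of_nonneg_right hfd ht0.le
          _ = ρ * Real.sqrt d * (t:ℝ)^((1:ℝ)-α) := by
              have hpow : (t:ℝ)^(-α) * t = (t:ℝ)^((1:ℝ)-α) := by
                rw [show (1:ℝ) - α = -α + 1 by ring, Real.rpow_add ht0, Real.rpow_one]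
              rw [mul_assoc, hpow]
      calc |((⌊f (xpt d q j)*t⌋:ℝ)) - ((⌊f (cpt d q m j)*t⌋:ℝ))|
          ≤ |f (xpt d q j)*t - f (cpt d q m j)*t| + 1 := floor_sub_abs _ _
        _ = |f (xpt d q j) - f (cpt d q m j)| * t + 1 := by rw [step2]
        _ ≤ ρ * Real.sqrt d * (t:ℝ)^((1:ℝ)-α) + 1 := by linarith
        _ ≤ (K:ℝ) := hK
    have hint : |(⌊f (xpt d q j)*t⌋ - ⌊f (cpt d q m j)*t⌋ : ℤ)| ≤ (K:ℤ) := by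
      have h5 : |((⌊f (xpt d q j)*t⌋ - ⌊f (cpt d q m j)*t⌋ : ℤ) : ℝ)| ≤ ((K:ℤ):ℝ) := by
        push_cast
        exact hreal
      exact_mod_cast h5
    exact abs_le.mp hint

lemma graph_close (d q m t : ℕ) (hq : q = m * t) (hm : 0 < m) (ht : 0 < t)
    (f : EuclideanSpace ℝ (Fin (d - 1)) → ℝ) (j j' : Fin (d - 1) → Fin q)
    (h : gkey d q m t f j = gkey d q m t f j') :
    dist (graphPt d q f j) (graphPt d q f j') ≤ Real.sqrt d / t := by
  have hq1 : 0 < q := by rw [hq]; positivity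
  have hq0 : (0:ℝ) < q := by exact_mod_cast hq1
  have ht0 : (0:ℝ) < t := by exact_mod_cast ht
  have hm0 : (m:ℝ) ≠ 0 := by exact_mod_cast hm.ne'
  have ht0' : (t:ℝ) ≠ 0 := ht0.ne'
  have hmq : (m:ℝ)/(q:ℝ) = 1/(t:ℝ) := by
    rw [hq]; push_cast; field_simp
  have hBe : ∀ i, (j i : ℕ)/m = (j' i : ℕ)/m := by
    intro i
    exact congrFun (congrArg Prod.fst h) i
  have hcpt : cpt d q m j = cpt d q m j' := by
    ext i
    show ((((j i:ℕ)/m*m : ℕ)):ℝ)/(q:ℝ) = ((((j' i:ℕ)/m*m : ℕ)):ℝ)/(q:ℝ)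
    rw [hBe i]
  have hfl : ⌊f (xpt d q j) * t⌋ = ⌊f (xpt d q j') * t⌋ := by
    have h2 : ⌊f (xpt d q j) * t⌋ - ⌊f (cpt d q m j) * t⌋
        = ⌊f (xpt d q j') * t⌋ - ⌊f (cpt d q m j') * t⌋ := congrArg Prod.snd h
    rw [hcpt] at h2
    omega
  have hcoordbd : ∀ i : Fin d, |graphPt d q f j i - graphPt d q f j' i| ≤ 1/(t:ℝ) := by
    intro i
    by_cases hi : (i:ℕ) < d - 1
    · have g1 : graphPt d q f j i = (((j ⟨i, hi⟩ : ℕ)):ℝ)/(q:ℝ) := by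
        simp only [graphPt]; rw [dif_pos hi]
      have g2 : graphPt d q f j' i = (((j' ⟨i, hi⟩ : ℕ)):ℝ)/(q:ℝ) := by
        simp only [graphPt]; rw [dif_pos hi]
      rw [g1, g2]
      set i' : Fin (d-1) := ⟨i, hi⟩
      have hbe := hBe i'
      have e1 := Nat.div_add_mod (j i' : ℕ) m
      have e2 := Nat.div_add_mod (j' i' : ℕ) m
      have e3 := Nat.mod_lt (j i' : ℕ) hm
      have e4 := Nat.mod_lt (j' i' : ℕ) hm
      have n1 : (j i' : ℕ) < (j' i' : ℕ) + m := by
        rw [← e1, ← e2, hbe]; omega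
      have n2 : (j' i' : ℕ) < (j i' : ℕ) + m := by
        rw [← e1, ← e2, hbe]; omega
      have c1 : (((j i' : ℕ)):ℝ) < (((j' i' : ℕ)):ℝ) + m := by exact_mod_cast n1
      have c2 : (((j' i' : ℕ)):ℝ) < (((j i' : ℕ)):ℝ) + m := by exact_mod_cast n2
      rw [div_sub_div_same, abs_div, abs_of_pos hq0, ← hmq]
      gcongr
      rw [abs_le]
      constructor <;> linarith
    · have g1 : graphPt d q f j i = f (xpt d q j) := by
        simp only [graphPt]; rw [dif_neg hi]; rfl
      have g2 : graphPt d q f j' i = f (xpt d q j') := by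
        simp only [graphPt]; rw [dif_neg hi]; rfl
      rw [g1, g2]
      have hd1 : |f (xpt d q j)*t - f (xpt d q j')*t| < 1 := abs_sub_lt_one_of_floor_eq hfl
      rw [← sub_mul, abs_mul, abs_of_pos ht0] at hd1
      rw [le_div_iff₀ ht0]
      linarith
  calc dist (graphPt d q f j) (graphPt d q f j')
      ≤ Real.sqrt d * (1/(t:ℝ)) := eudist_le _ _ (by positivity) hcoordbd
    _ = Real.sqrt d / t := by rw [mul_one_div]

lemma graph_sep (d q : ℕ) (hq : 0 < q)
    (f : EuclideanSpace ℝ (Fin (d - 1)) → ℝ) (j j' : Fin (d - 1) → Fin q)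
    (hne : j ≠ j') :
    1/(q:ℝ) ≤ dist (graphPt d q f j) (graphPt d q f j') := by
  have hq0 : (0:ℝ) < q := by exact_mod_cast hq
  obtain ⟨i, hi⟩ := Function.ne_iff.mp hne
  have hilt : (i : ℕ) < d := lt_of_lt_of_le i.isLt (Nat.sub_le d 1)
  set ii : Fin d := ⟨(i:ℕ), hilt⟩ with hii
  have hlt : ((ii:ℕ) : ℕ) < d - 1 := i.isLt
  have hmk : (⟨(ii:ℕ), hlt⟩ : Fin (d-1)) = i := rfl
  have g1 : graphPt d q f j ii = (((j i : ℕ)):ℝ)/(q:ℝ) := by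
    simp only [graphPt]; rw [dif_pos hlt, hmk]
  have g2 : graphPt d q f j' ii = (((j' i : ℕ)):ℝ)/(q:ℝ) := by
    simp only [graphPt]; rw [dif_pos hlt, hmk]
  have hne2 : (j i : ℕ) ≠ (j' i : ℕ) := fun hh => hi (Fin.ext hh)
  have habs : (1:ℝ) ≤ |(((j i : ℕ)):ℝ) - (((j' i : ℕ)):ℝ)| := by
    have hz : ((j i : ℕ):ℤ) - ((j' i : ℕ):ℤ) ≠ 0 :=
      sub_ne_zero.mpr (by exact_mod_cast hne2)
    have h6 := Int.one_le_abs hz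
    calc (1:ℝ) ≤ ((|((j i : ℕ):ℤ) - ((j' i : ℕ):ℤ)| : ℤ) : ℝ) := by exact_mod_cast h6
      _ = |(((j i : ℕ)):ℝ) - (((j' i : ℕ)):ℝ)| := by push_cast; ring_nf
  calc 1/(q:ℝ) ≤ |(((j i : ℕ)):ℝ) - (((j' i : ℕ)):ℝ)|/(q:ℝ) := by gcongr
    _ = |(((j i : ℕ)):ℝ)/(q:ℝ) - (((j' i : ℕ)):ℝ)/(q:ℝ)| := by
        rw [div_sub_div_same, abs_div, abs_of_pos hq0]
    _ = |graphPt d q f j ii - graphPt d q f j' ii| := by rw [g1, g2]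
    _ ≤ dist (graphPt d q f j) (graphPt d q f j') := eudist_ge _ _ ii

lemma energy_core {ι κ : Type*} [Fintype ι] [DecidableEq ι] [DecidableEq κ]
    (Φ : ι → κ) (A : Finset κ) (hmem : ∀ j, Φ j ∈ A)
    (D : ι → ι → ℝ) (e : ℝ) (he : 0 ≤ e)
    (hD0 : ∀ j j', 0 ≤ D j j')
    (hDlow : ∀ j j', j ≠ j' → Φ j = Φ j' → e ≤ D j j')
    (hA0 : 0 < (A.card : ℝ))
    (hcard : 2 * (A.card : ℝ) ≤ (Fintype.card ι : ℝ)) :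
    e / (2 * (A.card : ℝ)) ≤
      ((Fintype.card ι : ℝ)⁻¹) ^ 2 * ∑ j, ∑ j', if j ≠ j' then D j j' else 0 := by
  classical
  set n : ℝ := (Fintype.card ι : ℝ) with hn
  have hn0 : 0 < n := lt_of_lt_of_le (by linarith) hcard
  set NR : κ → ℝ := fun a => ∑ j' : ι, if Φ j' = a then (1:ℝ) else 0 with hNR
  have hNRcard : ∀ a, NR a = ((Finset.univ.filter (fun j' => Φ j' = a)).card : ℝ) := by
    intro a; rw [hNR]; simp [Finset.sum_boole]
  have htotal : ∑ a ∈ A, NR a = n := by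
    rw [hNR, Finset.sum_comm]
    have hone : ∀ j' : ι, (∑ a ∈ A, if Φ j' = a then (1:ℝ) else 0) = 1 := by
      intro j'
      rw [Finset.sum_ite_eq A (Φ j') (fun _ => (1:ℝ))]
      simp [hmem j']
    rw [Finset.sum_congr rfl (fun j' _ => hone j')]
    simp [hn, Finset.card_univ]
  set P : ℝ := ∑ a ∈ A, (NR a)^2 with hP
  have hCS : n^2 ≤ (A.card : ℝ) * P := by
    rw [← htotal, hP]
    exact_mod_cast sq_sum_le_card_mul_sum_sq (s := A) (f := NR)
  set S2 : ℝ := ∑ j : ι, ∑ j' : ι, if Φ j = Φ j' ∧ j ≠ j' then (1:ℝ) else 0 with hS2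
  have hS2eq : S2 = P - n := by
    have hrow : ∀ j : ι,
        (∑ j' : ι, if Φ j = Φ j' ∧ j ≠ j' then (1:ℝ) else 0) = NR (Φ j) - 1 := by
      intro j
      have hpt : ∀ j' : ι,
          (if Φ j = Φ j' ∧ j ≠ j' then (1:ℝ) else 0)
            = (if Φ j' = Φ j then (1:ℝ) else 0) - (if j = j' then (1:ℝ) else 0) := by
        intro j'
        by_cases h1 : j = j'
        · subst h1; simp
        · by_cases h2 : Φ j = Φ j' <;> simp [h1, h2, eq_comm]
      rw [Finset.sum_congr rfl (fun j' _ => hpt j'), Finset.sum_sub_distrib]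
      congr 1
      rw [Finset.sum_ite_eq Finset.univ j (fun _ => (1:ℝ))]
      simp
    rw [hS2, Finset.sum_congr rfl (fun j _ => hrow j), Finset.sum_sub_distrib]
    have hfib : ∑ j : ι, NR (Φ j) = P := by
      rw [← Finset.sum_fiberwise_of_maps_to (fun j _ => hmem j) (fun j => NR (Φ j)), hP]
      apply Finset.sum_congr rfl
      intro a _
      have h9 : ∀ j ∈ Finset.univ.filter (fun j => Φ j = a), NR (Φ j) = NR a := by
        intro j hj
        rw [(Finset.mem_filter.mp hj).2]
      rw [Finset.sum_congr rfl h9, Finset.sum_const, nsmul_eq_mul, ← hNRcard a, sq]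
    rw [hfib]
    simp [hn, Finset.card_univ]
  have hS2ge : n^2 / (2*(A.card:ℝ)) ≤ S2 := by
    rw [hS2eq, div_le_iff₀ (by positivity)]
    nlinarith [hCS, hn0, hA0]
  have hTlow : e * S2 ≤ ∑ j, ∑ j', if j ≠ j' then D j j' else 0 := by
    rw [hS2, Finset.mul_sum]
    apply Finset.sum_le_sum
    intro j _
    rw [Finset.mul_sum]
    apply Finset.sum_le_sum
    intro j' _
    by_cases hcond : Φ j = Φ j' ∧ j ≠ j'
    · rw [if_pos hcond, if_pos hcond.2, mul_one]
      exact hDlow j j' hcond.2 hcond.1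
    · rw [if_neg hcond, mul_zero]
      split_ifs with hne
      · exact hD0 j j'
      · exact le_refl 0
  calc e / (2*(A.card:ℝ)) = (n⁻¹)^2 * (e * (n^2/(2*(A.card:ℝ)))) := by
        field_simp
        try ring
    _ ≤ (n⁻¹)^2 * (e * S2) := by
        apply mul_le_mul_of_nonneg_left (mul_le_mul_of_nonneg_left hS2ge he) (by positivity)
    _ ≤ _ := by
        apply mul_le_mul_of_nonneg_left hTlow (by positivity)

set_option maxHeartbeats 1000000 in
lemma energy_blowup (d : ℕ) (α ρ : ℝ) (hd : 2 ≤ d)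
    (hα : α ∈ Set.Ioc (0 : ℝ) 1) (hρ : 0 ≤ ρ)
    (f : EuclideanSpace ℝ (Fin (d - 1)) → ℝ)
    (hHolder : ∀ x y, (∀ i, x i ∈ Set.Icc (0 : ℝ) 1) → (∀ i, y i ∈ Set.Icc (0 : ℝ) 1) →
      |f x - f y| ≤ ρ * dist x y ^ α)
    (s : ℝ) (hs0 : 0 ≤ s) (t : ℕ) (ht : 1 ≤ t) :
    (2 * (3 * (ρ * Real.sqrt d + 2)))⁻¹ * Real.sqrt d ^ (-s) * (t : ℝ) ^ (s - ((d : ℝ) - α))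
      ≤ graphEnergy d ((⌈2 * (3 * (ρ * Real.sqrt d + 2))⌉₊ + 1) * t * t) f s := by
  classical
  have hsd : (1 : ℝ) ≤ Real.sqrt d := by
    rw [show (1:ℝ) = Real.sqrt 1 by simp]
    exact Real.sqrt_le_sqrt (by exact_mod_cast Nat.one_le_of_lt hd)
  obtain ⟨C₁, hC1⟩ : ∃ c : ℝ, c = 3 * (ρ * Real.sqrt d + 2) := ⟨_, rfl⟩
  rw [← hC1]
  have hC1pos : 0 < C₁ := by rw [hC1]; nlinarith [Real.sqrt_nonneg (d:ℝ)]
  obtain ⟨m, hm⟩ : ∃ x : ℕ, x = (⌈2 * C₁⌉₊ + 1) * t := ⟨_, rfl⟩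
  rw [← hm]
  obtain ⟨q, hqdef⟩ : ∃ x : ℕ, x = m * t := ⟨_, rfl⟩
  rw [← hqdef]
  have hm1 : 1 ≤ m := by
    rw [hm]
    have h0 : 1 * 1 ≤ (⌈2 * C₁⌉₊ + 1) * t := Nat.mul_le_mul (by omega) ht
    simpa using h0
  have hmpos : 0 < m := hm1
  have htpos : 0 < t := ht
  have hq1 : 0 < q := by rw [hqdef]; exact Nat.mul_pos hmpos htpos
  have htR : (1:ℝ) ≤ (t:ℝ) := by exact_mod_cast ht
  have ht0 : (0:ℝ) < (t:ℝ) := by linarith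
  have hq0 : (0:ℝ) < (q:ℝ) := by exact_mod_cast hq1
  obtain ⟨K, hK⟩ : ∃ k : ℕ, k = ⌈ρ * Real.sqrt d * (t:ℝ)^((1:ℝ)-α)⌉₊ + 1 := ⟨_, rfl⟩
  have hK1 : 1 ≤ K := by rw [hK]; omega
  have hKlow : ρ * Real.sqrt d * (t:ℝ)^((1:ℝ)-α) + 1 ≤ (K:ℝ) := by
    have hc := Nat.le_ceil (ρ * Real.sqrt d * (t:ℝ)^((1:ℝ)-α))
    rw [hK]; push_cast; linarith
  obtain ⟨A, hA⟩ : ∃ a : Finset ((Fin (d-1) → ℕ) × ℤ),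
      a = (Fintype.piFinset fun _ : Fin (d-1) => Finset.range t) ×ˢ
        Finset.Icc (-(K:ℤ)) (K:ℤ) := ⟨_, rfl⟩
  have hmem : ∀ j : Fin (d-1) → Fin q, gkey d q m t f j ∈ A := by
    intro j
    rw [hA]
    exact gkey_mem d q m t K α ρ hqdef hmpos ht hα hρ hd f hHolder hKlow j
  -- cardinalities
  have hAnat : A.card = t^(d-1) * (2*K+1) := by
    rw [hA, Finset.card_product, Fintype.card_piFinset]
    have h1 : ((K:ℤ) + 1 - -(K:ℤ)).toNat = 2*K+1 := by omega
    rw [Int.card_Icc, h1]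
    simp
  have hAcard : (A.card : ℝ) = (t:ℝ)^(d-1) * (2*(K:ℝ)+1) := by
    rw [hAnat]; push_cast; ring
  have ht1a : (1:ℝ) ≤ (t:ℝ)^((1:ℝ)-α) := by
    calc (1:ℝ) = (t:ℝ)^(0:ℝ) := (Real.rpow_zero _).symm
      _ ≤ (t:ℝ)^((1:ℝ)-α) := Real.rpow_le_rpow_of_exponent_le htR (by linarith [hα.2])
  have hpowsplit : (t:ℝ)^(d-1:ℕ) * ((t:ℝ)^((1:ℝ)-α)) = (t:ℝ)^((d:ℝ)-α) := by
    rw [← Real.rpow_natCast (t:ℝ) (d-1), ← Real.rpow_add ht0]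
    congr 1
    have hca : ((d-1:ℕ):ℝ) = (d:ℝ) - 1 := by
      have h1 : (1:ℕ) ≤ d := by omega
      push_cast [Nat.cast_sub h1]
      ring
    rw [hca]; ring
  have hAcle : (A.card : ℝ) ≤ C₁ * (t:ℝ)^((d:ℝ)-α) := by
    have hK2 : (K:ℝ) ≤ ρ * Real.sqrt d * (t:ℝ)^((1:ℝ)-α) + 2 := by
      have hc : (⌈ρ * Real.sqrt d * (t:ℝ)^((1:ℝ)-α)⌉₊ : ℝ)
          < ρ * Real.sqrt d * (t:ℝ)^((1:ℝ)-α) + 1 := Nat.ceil_lt_add_one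
            (mul_nonneg (mul_nonneg hρ (Real.sqrt_nonneg _)) (Real.rpow_nonneg ht0.le _))
      rw [hK]; push_cast; linarith
    have h2 : 2*(K:ℝ)+1 ≤ 3*(K:ℝ) := by
      have h0 : (1:ℝ) ≤ (K:ℝ) := by exact_mod_cast hK1
      linarith
    have h3 : 3*(K:ℝ) ≤ C₁ * (t:ℝ)^((1:ℝ)-α) := by
      rw [hC1]
      nlinarith [ht1a, hK2, Real.sqrt_nonneg (d:ℝ),
        mul_nonneg hρ (Real.sqrt_nonneg (d:ℝ))]
    calc (A.card : ℝ) = (t:ℝ)^(d-1) * (2*(K:ℝ)+1) := hAcard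
      _ ≤ (t:ℝ)^(d-1) * (C₁ * (t:ℝ)^((1:ℝ)-α)) :=
          mul_le_mul_of_nonneg_left (le_trans h2 h3) (by positivity)
      _ = C₁ * (t:ℝ)^((d:ℝ)-α) := by rw [← hpowsplit]; ring
  have hA0 : (0:ℝ) < (A.card:ℝ) := by
    rw [hAcard]; positivity
  have hcardι : ((Fintype.card (Fin (d-1) → Fin q)):ℝ) = ((q:ℝ))^(d-1:ℕ) := by
    rw [Fintype.card_fun, Fintype.card_fin, Fintype.card_fin]
    push_cast
    ring
  have hnge : 2 * (C₁ * (t:ℝ)^((d:ℝ)-α)) ≤ ((q:ℝ))^(d-1:ℕ) := by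
    have hqR : (q:ℝ) = (m:ℝ) * t := by rw [hqdef]; push_cast; ring
    have hmR : 2*C₁*(t:ℝ) ≤ (m:ℝ) := by
      rw [hm]; push_cast
      have hcc := Nat.le_ceil (2*C₁)
      nlinarith
    have hmge1 : (1:ℝ) ≤ (m:ℝ) := by exact_mod_cast hm1
    have hstep : (m:ℝ) * (t:ℝ)^(d-1:ℕ) ≤ ((q:ℝ))^(d-1:ℕ) := by
      rw [hqR, mul_pow]
      have h5 : (m:ℝ) ≤ (m:ℝ)^(d-1:ℕ) := le_self_pow₀ hmge1 (by omega)
      have h6 : (0:ℝ) ≤ (t:ℝ)^(d-1:ℕ) := by positivity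
      nlinarith
    have h8 : (t:ℝ) * (t:ℝ)^(d-1:ℕ) = (t:ℝ)^((d:ℝ)) := by
      have he : (t:ℝ)^((d:ℝ)) = (t:ℝ)^((1:ℝ) + ((d-1:ℕ):ℝ)) := by
        congr 1
        have h1 : (1:ℕ) ≤ d := by omega
        push_cast [Nat.cast_sub h1]
        ring
      rw [he, Real.rpow_add ht0, Real.rpow_one, Real.rpow_natCast]
    have h9 : (t:ℝ)^((d:ℝ)-α) ≤ (t:ℝ)^((d:ℝ)) :=
      Real.rpow_le_rpow_of_exponent_le htR (by linarith [hα.1])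
    have h7 : 2*C₁*(t:ℝ) * (t:ℝ)^(d-1:ℕ) ≤ (m:ℝ) * (t:ℝ)^(d-1:ℕ) :=
      mul_le_mul_of_nonneg_right hmR (by positivity)
    calc 2 * (C₁ * (t:ℝ)^((d:ℝ)-α)) ≤ 2 * (C₁ * (t:ℝ)^((d:ℝ))) := by
          have h10 := mul_le_mul_of_nonneg_left h9 hC1pos.le
          linarith
      _ = 2*C₁*(t:ℝ) * (t:ℝ)^(d-1:ℕ) := by rw [← h8]; ring
      _ ≤ (m:ℝ) * (t:ℝ)^(d-1:ℕ) := h7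
      _ ≤ ((q:ℝ))^(d-1:ℕ) := hstep
  -- apply the core bound
  obtain ⟨E, hE⟩ : ∃ e : ℝ, e = Real.sqrt d / t := ⟨_, rfl⟩
  have hE0 : 0 < E := by
    rw [hE]
    exact div_pos (by linarith) ht0
  have hEs : (0:ℝ) ≤ E^(-s) := Real.rpow_nonneg hE0.le _
  have hcore := energy_core (gkey d q m t f) A hmem
    (fun j j' => dist (graphPt d q f j) (graphPt d q f j') ^ (-s)) (E^(-s)) hEs
    (fun j j' => Real.rpow_nonneg dist_nonneg _)
    (fun j j' hne heq => by
      have hdpos : 0 < dist (graphPt d q f j) (graphPt d q f j') :=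
        lt_of_lt_of_le (one_div_pos.mpr hq0) (graph_sep d q hq1 f j j' hne)
      refine Real.rpow_le_rpow_of_nonpos hdpos ?_ (neg_nonpos.mpr hs0)
      rw [hE]
      exact graph_close d q m t hqdef hmpos htpos f j j' heq)
    hA0
    (by rw [hcardι]; linarith)
  rw [hcardι] at hcore
  have hge : E^(-s) / (2*(A.card:ℝ)) ≤ graphEnergy d q f s := by
    unfold graphEnergy
    exact hcore
  have hfinal2 : E^(-s) / (2*(C₁ * (t:ℝ)^((d:ℝ)-α))) ≤ E^(-s) / (2*(A.card:ℝ)) := by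
    gcongr
  have hfinal3 : E^(-s) / (2*(C₁ * (t:ℝ)^((d:ℝ)-α)))
      = (2*C₁)⁻¹ * Real.sqrt d ^ (-s) * (t : ℝ) ^ (s - ((d : ℝ) - α)) := by
    have hEexp : E^(-s) = Real.sqrt d ^ (-s) * (t:ℝ)^s := by
      rw [hE, Real.div_rpow (Real.sqrt_nonneg _) ht0.le, div_eq_mul_inv,
        ← Real.rpow_neg ht0.le, neg_neg]
    have hsplit : (t:ℝ)^s = (t:ℝ)^(s - ((d:ℝ)-α)) * (t:ℝ)^((d:ℝ)-α) := by
      rw [← Real.rpow_add ht0]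
      congr 1
      ring
    rw [hEexp, hsplit]
    have h1 : (t:ℝ)^((d:ℝ)-α) ≠ 0 := ne_of_gt (Real.rpow_pos_of_pos ht0 _)
    field_simp
  calc (2*C₁)⁻¹ * Real.sqrt d ^ (-s) * (t : ℝ) ^ (s - ((d : ℝ) - α))
      = E^(-s) / (2*(C₁ * (t:ℝ)^((d:ℝ)-α))) := hfinal3.symm
    _ ≤ E^(-s) / (2*(A.card:ℝ)) := hfinal2
    _ ≤ graphEnergy d q f s := hge

/-- If `f : [0,1]^{d-1} → [0,1]` is Hölder continuous of order `α ∈ (0,1]`, the discrete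
Hausdorff dimension of the family `{G_n(f)}` is at most `d - α`:
`sup { s ∈ [0,d] : sup_q I_s(G_n(f)) < ∞ } ≤ d - α`. -/
theorem discreteDim_graph_le_of_holder (d : ℕ) (α ρ : ℝ) (hd : 2 ≤ d)
    (hα : α ∈ Set.Ioc (0 : ℝ) 1) (hρ : 0 ≤ ρ)
    (f : EuclideanSpace ℝ (Fin (d - 1)) → ℝ)
    (hf : ∀ x, (∀ i, x i ∈ Set.Icc (0 : ℝ) 1) → f x ∈ Set.Icc (0 : ℝ) 1)
    (hHolder : ∀ x y, (∀ i, x i ∈ Set.Icc (0 : ℝ) 1) → (∀ i, y i ∈ Set.Icc (0 : ℝ) 1) →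
      |f x - f y| ≤ ρ * dist x y ^ α) :
    sSup {s : ℝ | s ∈ Set.Icc (0 : ℝ) (d : ℝ) ∧
        ∃ M : ℝ, ∀ q : ℕ, 1 ≤ q → graphEnergy d q f s ≤ M} ≤ (d : ℝ) - α := by
  have hdR : (2:ℝ) ≤ (d:ℝ) := by exact_mod_cast hd
  have hda : (0:ℝ) ≤ (d:ℝ) - α := by linarith [hα.2]
  apply Real.sSup_le _ hda
  rintro s ⟨⟨hs0, hsd⟩, M, hM⟩
  by_contra hcon
  push_neg at hcon
  -- hcon : (d:ℝ) - α < s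
  have hsqd : (0:ℝ) < Real.sqrt d := Real.sqrt_pos.mpr (by linarith)
  have hC1pos : (0:ℝ) < 2 * (3 * (ρ * Real.sqrt d + 2)) := by
    nlinarith [Real.sqrt_nonneg (d:ℝ)]
  have hcpos : (0:ℝ) < (2 * (3 * (ρ * Real.sqrt d + 2)))⁻¹ * Real.sqrt d ^ (-s) :=
    mul_pos (inv_pos.mpr hC1pos) (Real.rpow_pos_of_pos hsqd _)
  have htend : Filter.Tendsto
      (fun t : ℕ => (2 * (3 * (ρ * Real.sqrt d + 2)))⁻¹ * Real.sqrt d ^ (-s)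
        * (t : ℝ) ^ (s - ((d : ℝ) - α))) Filter.atTop Filter.atTop := by
    apply Filter.Tendsto.const_mul_atTop hcpos
    exact (tendsto_rpow_atTop (by linarith)).comp tendsto_natCast_atTop_atTop
  obtain ⟨t, hMt, ht1⟩ :=
    ((htend.eventually_gt_atTop M).and (Filter.eventually_ge_atTop 1)).exists
  have hb := energy_blowup d α ρ hd hα hρ f hHolder s hs0 t ht1
  have hq1 : 1 ≤ (⌈2 * (3 * (ρ * Real.sqrt d + 2))⌉₊ + 1) * t * t :=
    Nat.one_le_iff_ne_zero.2 (by positivity)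
  have hMq := hM _ hq1
  linarith
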